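/- Define β_⋆(A) = min_{x,y ∈ ℝⁿ} ‖D_x A - A D_y - 𝟙𝟙ᵀ‖_⋆ and κ_⋆(A) = min_{X ∈ 𝒟} ‖A^{[-1]} - X‖_⋆, where D_x = Diag(x), D_y = Diag(y). Then for any matrix A without zero entries, κ_⋆(A)/‖A^{[-1]}‖_max ≤ β_⋆(A) ≤ κ_⋆(A)·‖A‖_max, for ⋆ ∈ {F, max}. -/
import Mathlib


open Matrix BigOperators

noncomputable def frobNorm {n : ℕ} (A : Matrix (Fin n) (Fin n) ℝ) : ℝ :=
  Real.sqrt (∑ i, ∑ j, (A i j) ^ 2)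

noncomputable def maxNorm {n : ℕ} (A : Matrix (Fin n) (Fin n) ℝ) : ℝ :=
  ⨆ i, ⨆ j, |A i j|

def Delta {n : ℕ} (x y : Fin n → ℝ) : Matrix (Fin n) (Fin n) ℝ :=
  Matrix.of fun i j => x i - y j

noncomputable def kappaF {n : ℕ} (A : Matrix (Fin n) (Fin n) ℝ) : ℝ :=
  ⨅ p : (Fin n → ℝ) × (Fin n → ℝ),
    frobNorm ((Matrix.of fun i j => (A i j)⁻¹) - Delta p.1 p.2)

noncomputable def kappaMax {n : ℕ} (A : Matrix (Fin n) (Fin n) ℝ) : ℝ :=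
  ⨅ p : (Fin n → ℝ) × (Fin n → ℝ),
    maxNorm ((Matrix.of fun i j => (A i j)⁻¹) - Delta p.1 p.2)

noncomputable def betaF {n : ℕ} (A : Matrix (Fin n) (Fin n) ℝ) : ℝ :=
  ⨅ p : (Fin n → ℝ) × (Fin n → ℝ),
    frobNorm (Matrix.diagonal p.1 * A - A * Matrix.diagonal p.2 -
      Matrix.of fun _ _ => 1)

noncomputable def betaMax {n : ℕ} (A : Matrix (Fin n) (Fin n) ℝ) : ℝ :=
  ⨅ p : (Fin n → ℝ) × (Fin n → ℝ),
    maxNorm (Matrix.diagonal p.1 * A - A * Matrix.diagonal p.2 -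
      Matrix.of fun _ _ => 1)

lemma frobNorm_nonneg {n : ℕ} (A : Matrix (Fin n) (Fin n) ℝ) : 0 ≤ frobNorm A :=
  Real.sqrt_nonneg _

lemma maxNorm_nonneg {n : ℕ} (A : Matrix (Fin n) (Fin n) ℝ) : 0 ≤ maxNorm A :=
  Real.iSup_nonneg fun _ => Real.iSup_nonneg fun _ => abs_nonneg _

lemma abs_le_maxNorm {n : ℕ} (A : Matrix (Fin n) (Fin n) ℝ) (i j : Fin n) :
    |A i j| ≤ maxNorm A := by
  calc |A i j| ≤ ⨆ j, |A i j| :=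
        le_ciSup (f := fun j => |A i j|)
          (Set.Finite.bddAbove (Set.finite_range _)) j
    _ ≤ ⨆ i, ⨆ j, |A i j| :=
        le_ciSup (f := fun i => ⨆ j, |A i j|)
          (Set.Finite.bddAbove (Set.finite_range _)) i

lemma frobNorm_scale {n : ℕ} (B C : Matrix (Fin n) (Fin n) ℝ) (c : ℝ) (hc : 0 ≤ c)
    (h : ∀ i j, |B i j| ≤ c * |C i j|) : frobNorm B ≤ c * frobNorm C := by
  unfold frobNorm
  rw [← Real.sqrt_sq hc, ← Real.sqrt_mul (sq_nonneg c)]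
  apply Real.sqrt_le_sqrt
  rw [Finset.mul_sum]
  apply Finset.sum_le_sum
  intro i _
  rw [Finset.mul_sum]
  apply Finset.sum_le_sum
  intro j _
  have : B i j ^ 2 ≤ (c * |C i j|) ^ 2 := by
    rw [← sq_abs (B i j)]
    exact pow_le_pow_left₀ (abs_nonneg _) (h i j) 2
  calc B i j ^ 2 ≤ (c * |C i j|) ^ 2 := this
    _ = c ^ 2 * C i j ^ 2 := by rw [mul_pow, sq_abs]

lemma maxNorm_scale {n : ℕ} (B C : Matrix (Fin n) (Fin n) ℝ) (c : ℝ) (hc : 0 ≤ c)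
    (h : ∀ i j, |B i j| ≤ c * |C i j|) : maxNorm B ≤ c * maxNorm C := by
  have hcC : 0 ≤ c * maxNorm C := mul_nonneg hc (maxNorm_nonneg C)
  refine Real.iSup_le (fun i => Real.iSup_le (fun j => ?_) hcC) hcC
  exact (h i j).trans (mul_le_mul_of_nonneg_left (abs_le_maxNorm C i j) hc)

lemma main_aux {n : ℕ} (hn : 0 < n) (A : Matrix (Fin n) (Fin n) ℝ)
    (hA : ∀ i j, A i j ≠ 0) (ν : Matrix (Fin n) (Fin n) ℝ → ℝ)
    (hν0 : ∀ M, 0 ≤ ν M)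
    (hscale : ∀ (B C : Matrix (Fin n) (Fin n) ℝ) (c : ℝ), 0 ≤ c →
      (∀ i j, |B i j| ≤ c * |C i j|) → ν B ≤ c * ν C) :
    (⨅ p : (Fin n → ℝ) × (Fin n → ℝ),
        ν ((Matrix.of fun i j => (A i j)⁻¹) - Delta p.1 p.2)) /
      maxNorm (Matrix.of fun i j => (A i j)⁻¹) ≤
      (⨅ p : (Fin n → ℝ) × (Fin n → ℝ),
        ν (Matrix.diagonal p.1 * A - A * Matrix.diagonal p.2 -
          Matrix.of fun _ _ => 1)) ∧
    (⨅ p : (Fin n → ℝ) × (Fin n → ℝ),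
        ν (Matrix.diagonal p.1 * A - A * Matrix.diagonal p.2 -
          Matrix.of fun _ _ => 1)) ≤
      (⨅ p : (Fin n → ℝ) × (Fin n → ℝ),
        ν ((Matrix.of fun i j => (A i j)⁻¹) - Delta p.1 p.2)) * maxNorm A := by
  haveI : NeZero n := ⟨hn.ne'⟩
  set Ainv : Matrix (Fin n) (Fin n) ℝ := Matrix.of fun i j => (A i j)⁻¹ with hAinv
  set B : (Fin n → ℝ) × (Fin n → ℝ) → Matrix (Fin n) (Fin n) ℝ :=
    fun p => Matrix.diagonal p.1 * A - A * Matrix.diagonal p.2 -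
      Matrix.of fun _ _ => 1 with hBdef
  set C : (Fin n → ℝ) × (Fin n → ℝ) → Matrix (Fin n) (Fin n) ℝ :=
    fun p => Ainv - Delta p.1 p.2 with hCdef
  have hBentry : ∀ p i j, B p i j = p.1 i * A i j - A i j * p.2 j - 1 := by
    intro p i j
    simp [hBdef, Matrix.sub_apply, Matrix.diagonal_mul, Matrix.mul_diagonal]
  have hCentry : ∀ p i j, C p i j = (A i j)⁻¹ - (p.1 i - p.2 j) := by
    intro p i j
    simp [hCdef, hAinv, Matrix.sub_apply, Delta]
  have hkey : ∀ p i j, |B p i j| = |A i j| * |C p i j| := by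
    intro p i j
    have e : p.1 i * A i j - A i j * p.2 j - 1 =
        -(A i j * ((A i j)⁻¹ - (p.1 i - p.2 j))) := by
      rw [mul_sub, mul_inv_cancel₀ (hA i j)]; ring
    rw [hBentry, hCentry, e, abs_neg, abs_mul]
  have i0 : Fin n := ⟨0, hn⟩
  have hMa : 0 < maxNorm A :=
    lt_of_lt_of_le (abs_pos.mpr (hA i0 i0)) (abs_le_maxNorm A i0 i0)
  have hMinv : 0 < maxNorm Ainv := by
    refine lt_of_lt_of_le ?_ (abs_le_maxNorm Ainv i0 i0)
    simpa [hAinv] using abs_pos.mpr (inv_ne_zero (hA i0 i0))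
  have hbddB : BddBelow (Set.range fun p => ν (B p)) :=
    ⟨0, by rintro x ⟨p, rfl⟩; exact hν0 _⟩
  have hbddC : BddBelow (Set.range fun p => ν (C p)) :=
    ⟨0, by rintro x ⟨p, rfl⟩; exact hν0 _⟩
  have h1 : ∀ p, ν (B p) ≤ maxNorm A * ν (C p) := by
    intro p
    refine hscale _ _ _ hMa.le fun i j => ?_
    rw [hkey]
    exact mul_le_mul_of_nonneg_right (abs_le_maxNorm A i j) (abs_nonneg _)
  have h2 : ∀ p, ν (C p) ≤ maxNorm Ainv * ν (B p) := by
    intro p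
    refine hscale _ _ _ hMinv.le fun i j => ?_
    have : |C p i j| = |Ainv i j| * |B p i j| := by
      rw [hkey, hAinv]
      simp only [Matrix.of_apply, abs_inv]
      rw [← mul_assoc, inv_mul_cancel₀ (abs_ne_zero.mpr (hA i j)), one_mul]
    rw [this]
    exact mul_le_mul_of_nonneg_right (abs_le_maxNorm Ainv i j) (abs_nonneg _)
  constructor
  · refine le_ciInf fun p => ?_
    rw [div_le_iff₀ hMinv]
    calc (⨅ p, ν (C p)) ≤ ν (C p) := ciInf_le hbddC p
      _ ≤ maxNorm Ainv * ν (B p) := h2 p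
      _ = ν (B p) * maxNorm Ainv := mul_comm _ _
  · rw [← div_le_iff₀ hMa]
    refine le_ciInf fun p => ?_
    rw [div_le_iff₀ hMa]
    calc (⨅ p, ν (B p)) ≤ ν (B p) := ciInf_le hbddB p
      _ ≤ maxNorm A * ν (C p) := h1 p
      _ = ν (C p) * maxNorm A := mul_comm _ _

theorem stmt17 {n : ℕ} (A : Matrix (Fin n) (Fin n) ℝ) (hA : ∀ i j, A i j ≠ 0) :
    kappaF A / maxNorm (Matrix.of fun i j => (A i j)⁻¹) ≤ betaF A ∧
    betaF A ≤ kappaF A * maxNorm A ∧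
    kappaMax A / maxNorm (Matrix.of fun i j => (A i j)⁻¹) ≤ betaMax A ∧
    betaMax A ≤ kappaMax A * maxNorm A := by
  rcases Nat.eq_zero_or_pos n with hn | hn
  · subst hn
    simp [kappaF, betaF, kappaMax, betaMax, frobNorm, maxNorm,
      ciInf_const, ciSup_of_empty, Real.sSup_empty]
  · have hF := main_aux hn A hA frobNorm frobNorm_nonneg frobNorm_scale
    have hM := main_aux hn A hA maxNorm maxNorm_nonneg maxNorm_scale
    exact ⟨hF.1, hF.2, hM.1, hM.2⟩
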